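/- Let n ≥ 1 and let f : ℝ^n → ℝ be a nonnegative quasi-concave function with f ∈ L¹(ℝ^n). Then ∫_{ℝ^n} Δ_{−∞} f(x) dx ≤ 2^{−n} · C(2n, n) · ∫_{ℝ^n} f(x) dx, where C(2n, n) denotes the binomial coefficient (2n choose n). -/

import Mathlib

open MeasureTheory Set
open scoped ENNReal

/-- A nonnegative `f : ℝⁿ → ℝ` is quasi-concave if
`f(t x + (1−t) y) ≥ min(f(x), f(y))` for all `x, y` and `t ∈ [0,1]`. -/
def QuasiConcaveFn {n : ℕ} (f : (Fin n → ℝ) → ℝ) : Prop :=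
  ∀ x y : Fin n → ℝ, ∀ t : ℝ, t ∈ Set.Icc (0 : ℝ) 1 →
    min (f x) (f y) ≤ f (t • x + (1 - t) • y)

/-- The `(−∞)`-difference function of `f`:
`Δ_{−∞} f(z) = sup { min(f(x), f(−y)) : (x+y)/2 = z }`, valued in `[0,∞]`. -/
noncomputable def diffNegInf {n : ℕ} (f : (Fin n → ℝ) → ℝ) (z : Fin n → ℝ) : ℝ≥0∞ :=
  sSup {r : ℝ≥0∞ | ∃ x y : Fin n → ℝ, (1 / 2 : ℝ) • (x + y) = z ∧
    r = ENNReal.ofReal (min (f x) (f (-y)))}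

open Measure Module
open scoped Nat Pointwise

/-!
A superlevel set `{c < Δ_{−∞} f}` is contained in `½ (S − S)` for the convex superlevel set
`S = {c < f}`, so the Rogers–Shephard inequality `|S − S| ≤ C(2n, n) |S|` bounds its volume by
`2⁻ⁿ C(2n, n) |S|`, and the layer-cake formula integrates this bound over `c`.

Rogers–Shephard comes from `g(x) = |K ∩ (x + K)|`: by Fubini `∫ g = |K|²`, while by convexity
`g ≥ (1 − λ)ⁿ |K|` on `λ (K − K)`. Integrating the superlevel sets of `g` thus gives
`|K|² ≥ |K| |K − K| ∫₀¹ (1 − s^{1/n})ⁿ ds = |K| |K − K| / C(2n, n)`, a Beta integral.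
-/

theorem integral_pow_mul_one_sub_pow_succ (a b : ℕ) :
    (a + 1 : ℝ) * ∫ u in (0 : ℝ)..1, u ^ a * (1 - u) ^ (b + 1) =
      (b + 1) * ∫ u in (0 : ℝ)..1, u ^ (a + 1) * (1 - u) ^ b := by
  have ibp := intervalIntegral.integral_mul_deriv_eq_deriv_mul (a := 0) (b := 1)
    (u := fun u : ℝ => (1 - u) ^ (b + 1)) (u' := fun u => -((b + 1) * (1 - u) ^ b))
    (v := fun u : ℝ => u ^ (a + 1)) (v' := fun u => (a + 1) * u ^ a)
    (fun u _ => by simpa using ((hasDerivAt_id u).const_sub 1).fun_pow (b + 1))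
    (fun u _ => by simpa using hasDerivAt_pow (a + 1) u)
    (Continuous.intervalIntegrable (by fun_prop) _ _)
    (Continuous.intervalIntegrable (by fun_prop) _ _)
  simp only [sub_self, zero_pow (Nat.succ_ne_zero _), zero_mul, sub_zero, mul_zero,
    zero_sub, ← intervalIntegral.integral_neg] at ibp
  rw [← intervalIntegral.integral_const_mul, ← intervalIntegral.integral_const_mul]
  convert ibp using 1 <;> exact intervalIntegral.integral_congr fun u _ => by ring

theorem integral_pow_mul_one_sub_pow (a b : ℕ) :
    ∫ u in (0 : ℝ)..1, u ^ a * (1 - u) ^ b = (a ! * b ! : ℝ) / (a + b + 1)! := by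
  induction b generalizing a with
  | zero =>
    simp only [pow_zero, mul_one, integral_pow, one_pow, zero_pow (Nat.succ_ne_zero a), sub_zero,
      Nat.factorial_zero, add_zero, Nat.factorial_succ]
    push_cast
    field_simp
  | succ b ih =>
    have h := integral_pow_mul_one_sub_pow_succ a b
    rw [ih (a + 1), show a + 1 + b + 1 = a + (b + 1) + 1 by omega] at h
    have ha : (a + 1 : ℝ) ≠ 0 := by positivity
    rw [← mul_right_inj' ha, h]
    push_cast [Nat.factorial_succ]
    field_simp

theorem integral_one_sub_rpow_inv_pow {n : ℕ} (hn : n ≠ 0) :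
    ∫ s in (0 : ℝ)..1, (1 - s ^ (n⁻¹ : ℝ)) ^ n = ((2 * n).choose n : ℝ)⁻¹ := by
  have hsub := intervalIntegral.integral_comp_mul_deriv (a := 0) (b := 1)
    (f := fun u : ℝ => u ^ n) (f' := fun u => n * u ^ (n - 1))
    (g := fun s : ℝ => (1 - s ^ (n⁻¹ : ℝ)) ^ n)
    (fun u _ => hasDerivAt_pow n u) (by fun_prop)
    (by have := Real.continuous_rpow_const (q := (n⁻¹ : ℝ)) (by positivity); fun_prop)
  simp only [one_pow, zero_pow hn] at hsub
  rw [← hsub, intervalIntegral.integral_congr (g := fun u => n * (u ^ (n - 1) * (1 - u) ^ n)),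
    intervalIntegral.integral_const_mul, integral_pow_mul_one_sub_pow,
    show n - 1 + n + 1 = 2 * n by omega, Nat.cast_choose ℝ (by omega : n ≤ 2 * n),
    show 2 * n - n = n by omega, ← Nat.mul_factorial_pred hn]
  · push_cast
    field_simp
  · intro u hu
    rw [uIcc_of_le zero_le_one] at hu
    simp only [Function.comp_apply, ← Real.rpow_natCast u n, ← Real.rpow_mul hu.1,
      mul_inv_cancel₀ (Nat.cast_ne_zero.2 hn : (n : ℝ) ≠ 0), Real.rpow_one]
    ring

theorem lintegral_ofReal_one_sub_div_rpow_inv_pow {n : ℕ} (hn : n ≠ 0) {v : ℝ} (hv : 0 < v) :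
    ∫⁻ t in Ioc 0 v, ENNReal.ofReal ((1 - (t / v) ^ (n⁻¹ : ℝ)) ^ n) =
      ENNReal.ofReal v / (2 * n).choose n := by
  have hcont : Continuous fun t : ℝ => (1 - (t / v) ^ (n⁻¹ : ℝ)) ^ n := by
    have := Real.continuous_rpow_const (q := (n⁻¹ : ℝ)) (by positivity); fun_prop
  have hnonneg : ∀ t ∈ Ioc 0 v, 0 ≤ (1 - (t / v) ^ (n⁻¹ : ℝ)) ^ n := fun t ht => by
    have : (t / v) ^ (n⁻¹ : ℝ) ≤ 1 :=
      Real.rpow_le_one (div_nonneg ht.1.le hv.le) ((div_le_one hv).2 ht.2) (by positivity)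
    exact pow_nonneg (sub_nonneg.2 this) n
  rw [← ofReal_integral_eq_lintegral_ofReal hcont.integrableOn_Ioc
      ((ae_restrict_iff' measurableSet_Ioc).2 (.of_forall hnonneg)),
    ← intervalIntegral.integral_of_le hv.le,
    intervalIntegral.integral_comp_div (fun s => (1 - s ^ (n⁻¹ : ℝ)) ^ n) hv.ne', zero_div,
    div_self hv.ne', integral_one_sub_rpow_inv_pow hn, smul_eq_mul, ← div_eq_mul_inv,
    ENNReal.ofReal_div_of_pos (Nat.cast_pos.2 (Nat.choose_pos (by omega))),
    ENNReal.ofReal_natCast]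

theorem volume_restrict_Ioi_setOf_ofReal_lt (a : ℝ≥0∞) :
    volume.restrict (Ioi 0) {t : ℝ | ENNReal.ofReal t < a} = a := by
  rw [restrict_apply' measurableSet_Ioi]
  rcases eq_or_ne a ∞ with rfl | ha
  · simp
  have : {t : ℝ | ENNReal.ofReal t < a} ∩ Ioi 0 = Ioo 0 a.toReal := by
    ext t
    simp only [mem_inter_iff, mem_ofPred_eq, mem_Ioi, mem_Ioo, and_comm (a := 0 < t)]
    exact and_congr_left fun ht => ENNReal.ofReal_lt_iff_lt_toReal ht.le ha
  rw [this, Real.volume_Ioo, sub_zero, ENNReal.ofReal_toReal ha]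

theorem lintegral_eq_lintegral_meas_ofReal_lt {α : Type*} [MeasurableSpace α] {μ : Measure α}
    [SFinite μ] {F : α → ℝ≥0∞} (hF : AEMeasurable F μ) :
    ∫⁻ x, F x ∂μ = ∫⁻ t in Ioi 0, μ {x | ENNReal.ofReal t < F x} := by
  have hA : MeasurableSet {p : α × ℝ | ENNReal.ofReal p.2 < hF.mk F p.1} :=
    measurableSet_lt (ENNReal.measurable_ofReal.comp measurable_snd)
      (hF.measurable_mk.comp measurable_fst)
  have hlevel : ∀ t : ℝ,
      μ {x | ENNReal.ofReal t < F x} = μ {x | ENNReal.ofReal t < hF.mk F x} := fun t =>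
    measure_congr <| Filter.eventuallyEq_set.2 <| hF.ae_eq_mk.mono fun x hx => by simp [hx]
  calc ∫⁻ x, F x ∂μ
      = ∫⁻ x, volume.restrict (Ioi 0)
          (Prod.mk x ⁻¹' {p : α × ℝ | ENNReal.ofReal p.2 < hF.mk F p.1}) ∂μ :=
        lintegral_congr_ae <| hF.ae_eq_mk.mono fun x hx => by
          rw [hx, ← volume_restrict_Ioi_setOf_ofReal_lt (hF.mk F x)]; rfl
    _ = _ := by
      rw [← Measure.prod_apply hA, Measure.prod_apply_symm hA]
      simp_rw [hlevel]
      rfl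

theorem inter_vadd_eq_preimage_prodMk {G : Type*} [AddCommGroup G] (s t : Set G) (x : G) :
    s ∩ (x +ᵥ t) = Prod.mk x ⁻¹' {p : G × G | p.2 ∈ s ∧ p.2 - p.1 ∈ t} := by
  ext y
  simp [mem_vadd_set_iff_neg_vadd_mem, neg_add_eq_sub]

section InterVAdd

variable {G : Type*} [MeasurableSpace G] [AddCommGroup G] [MeasurableAdd₂ G] [MeasurableNeg G]
  {μ : Measure G} [SFinite μ] [μ.IsAddLeftInvariant] {s t : Set G}

theorem measure_toMeasurable_inter_vadd (hs : NullMeasurableSet s μ) (ht : NullMeasurableSet t μ)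
    (x : G) : μ (toMeasurable μ s ∩ (x +ᵥ toMeasurable μ t)) = μ (s ∩ (x +ᵥ t)) :=
  measure_congr (hs.toMeasurable_ae_eq.inter ((vadd_set_ae_eq x).2 ht.toMeasurable_ae_eq))

theorem measurable_measure_inter_vadd (hs : NullMeasurableSet s μ) (ht : NullMeasurableSet t μ) :
    Measurable fun x : G => μ (s ∩ (x +ᵥ t)) := by
  simp_rw [← measure_toMeasurable_inter_vadd hs ht, inter_vadd_eq_preimage_prodMk]
  exact measurable_measure_prodMk_left <| (measurable_snd (measurableSet_toMeasurable μ s)).inter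
    ((measurable_snd.sub measurable_fst) (measurableSet_toMeasurable μ t))

theorem lintegral_measure_inter_vadd_of_measurableSet [μ.IsNegInvariant] (hs : MeasurableSet s)
    (ht : MeasurableSet t) : ∫⁻ x, μ (s ∩ (x +ᵥ t)) ∂μ = μ s * μ t := by
  have hA : MeasurableSet {p : G × G | p.2 ∈ s ∧ p.2 - p.1 ∈ t} :=
    (measurable_snd hs).inter ((measurable_snd.sub measurable_fst) ht)
  have hfiber : ∀ y, μ ((fun x => (x, y)) ⁻¹' {p : G × G | p.2 ∈ s ∧ p.2 - p.1 ∈ t}) =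
      s.indicator (fun _ => μ t) y := by
    intro y
    by_cases hys : y ∈ s
    · simpa [hys, preimage] using
        (Measure.measurePreserving_sub_left μ y).measure_preimage ht.nullMeasurableSet
    · simp [hys]
  simp_rw [inter_vadd_eq_preimage_prodMk, ← Measure.prod_apply hA, Measure.prod_apply_symm hA,
    hfiber, lintegral_indicator_const hs, mul_comm]

theorem lintegral_measure_inter_vadd [μ.IsNegInvariant] (hs : NullMeasurableSet s μ)
    (ht : NullMeasurableSet t μ) : ∫⁻ x, μ (s ∩ (x +ᵥ t)) ∂μ = μ s * μ t := by
  simp_rw [← measure_toMeasurable_inter_vadd hs ht, ← measure_toMeasurable s,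
    ← measure_toMeasurable t]
  exact lintegral_measure_inter_vadd_of_measurableSet (measurableSet_toMeasurable μ s)
    (measurableSet_toMeasurable μ t)

end InterVAdd

namespace Convex

variable {E : Type*} [NormedAddCommGroup E] [NormedSpace ℝ E] [MeasurableSpace E] [BorelSpace E]
  [FiniteDimensional ℝ E] (μ : Measure E) [μ.IsAddHaarMeasure] {K : Set E}

theorem ofReal_one_sub_pow_mul_le_measure_inter_vadd (hK : Convex ℝ K) {l : ℝ} (hl0 : 0 ≤ l)
    (hl1 : l ≤ 1) {x : E} (hx : x ∈ l • (K - K)) :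
    ENNReal.ofReal ((1 - l) ^ finrank ℝ E) * μ K ≤ μ (K ∩ (x +ᵥ K)) := by
  obtain ⟨_, ⟨a, ha, b, hb, rfl⟩, rfl⟩ := hx
  have hsub : l • a +ᵥ (1 - l) • K ⊆ K ∩ (l • (a - b) +ᵥ K) := by
    rintro _ ⟨_, ⟨k, hk, rfl⟩, rfl⟩
    refine ⟨?_, mem_vadd_set.2 ⟨(1 - l) • k + l • b, ?_, ?_⟩⟩
    · simpa [vadd_eq_add, add_comm] using hK hk ha (sub_nonneg.2 hl1) hl0 (by ring)
    · exact hK hk hb (sub_nonneg.2 hl1) hl0 (by ring)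
    · simp only [vadd_eq_add, smul_sub]; abel
  calc ENNReal.ofReal ((1 - l) ^ finrank ℝ E) * μ K = μ (l • a +ᵥ (1 - l) • K) := by
        rw [measure_vadd, addHaar_smul_of_nonneg μ (sub_nonneg.2 hl1)]
    _ ≤ μ (K ∩ (l • (a - b) +ᵥ K)) := measure_mono hsub

theorem addHaar_sub_self_eq_zero (hK : Convex ℝ K) (h : μ K = 0) : μ (K - K) = 0 := by
  rcases K.eq_empty_or_nonempty with rfl | ⟨a, ha⟩
  · simp
  have hspan : affineSpan ℝ K ≠ ⊤ := by
    rw [Ne, ← hK.interior_nonempty_iff_affineSpan_eq_top, interior_eq_empty_of_null h]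
    exact not_nonempty_empty
  refine measure_mono_null ?_ (addHaar_submodule μ _
    (mt (AffineSubspace.direction_eq_top_iff_of_nonempty
      ⟨a, subset_affineSpan ℝ K ha⟩).1 hspan))
  rintro _ ⟨x, hx, y, hy, rfl⟩
  exact AffineSubspace.vsub_mem_direction (subset_affineSpan ℝ K hx) (subset_affineSpan ℝ K hy)

theorem measure_div_choose_mul_addHaar_sub_self_le (hK : Convex ℝ K) (hn : finrank ℝ E ≠ 0)
    (hK0 : μ K ≠ 0) (hKtop : μ K ≠ ∞) :
    μ K / (2 * finrank ℝ E).choose (finrank ℝ E) * μ (K - K) ≤ μ K * μ K := by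
  set n := finrank ℝ E
  set v := (μ K).toReal
  have hv : 0 < v := ENNReal.toReal_pos hK0 hKtop
  have hKnull : NullMeasurableSet K μ := hK.nullMeasurableSet μ
  set g : E → ℝ := fun x => (μ (K ∩ (x +ᵥ K))).toReal
  have hg : ∀ x, ENNReal.ofReal (g x) = μ (K ∩ (x +ᵥ K)) := fun x =>
    ENNReal.ofReal_toReal (ne_top_of_le_ne_top hKtop (measure_mono inter_subset_left))
  have hlevel : ∀ t ∈ Ioc 0 v,
      ENNReal.ofReal ((1 - (t / v) ^ (n⁻¹ : ℝ)) ^ n) * μ (K - K) ≤ μ {x | t ≤ g x} := by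
    rintro t ⟨ht0, htv⟩
    -- `l` is chosen so that `(1 - l) ^ n * μ K = t`.
    set l := 1 - (t / v) ^ (n⁻¹ : ℝ)
    have hr0 : 0 ≤ (t / v) ^ (n⁻¹ : ℝ) := by positivity
    have hr1 : (t / v) ^ (n⁻¹ : ℝ) ≤ 1 :=
      Real.rpow_le_one (by positivity) ((div_le_one hv).2 htv) (by positivity)
    have hl : (1 - l) ^ n = t / v := by
      rw [sub_sub_cancel, ← Real.rpow_natCast, ← Real.rpow_mul (by positivity),
        inv_mul_cancel₀ (by exact_mod_cast hn), Real.rpow_one]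
    calc ENNReal.ofReal (l ^ n) * μ (K - K) = μ (l • (K - K)) :=
          (addHaar_smul_of_nonneg μ (by linarith) _).symm
      _ ≤ μ {x | t ≤ g x} := measure_mono fun x hx => by
          have := hK.ofReal_one_sub_pow_mul_le_measure_inter_vadd μ (by linarith) (by linarith)
            hx
          rw [hl, ← ENNReal.ofReal_toReal hKtop, ← ENNReal.ofReal_mul (by positivity),
            div_mul_cancel₀ _ hv.ne', ← hg] at this
          exact (ENNReal.ofReal_le_ofReal_iff ENNReal.toReal_nonneg).1 this
  calc μ K / _ * μ (K - K)
      = ∫⁻ t in Ioc 0 v, ENNReal.ofReal ((1 - (t / v) ^ (n⁻¹ : ℝ)) ^ n) * μ (K - K) := by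
        rw [lintegral_mul_const _ (by fun_prop), lintegral_ofReal_one_sub_div_rpow_inv_pow hn hv,
          ENNReal.ofReal_toReal hKtop]
    _ ≤ ∫⁻ t in Ioc 0 v, μ {x | t ≤ g x} := setLIntegral_mono' measurableSet_Ioc hlevel
    _ ≤ ∫⁻ t in Ioi 0, μ {x | t ≤ g x} := lintegral_mono_set Ioc_subset_Ioi_self
    _ = ∫⁻ x, ENNReal.ofReal (g x) ∂μ :=
        (lintegral_eq_lintegral_meas_le μ (.of_forall fun _ => ENNReal.toReal_nonneg)
          (measurable_measure_inter_vadd hKnull hKnull).ennreal_toReal.aemeasurable).symm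
    _ = μ K * μ K := by simp_rw [hg]; exact lintegral_measure_inter_vadd hKnull hKnull

theorem addHaar_sub_self_le (hK : Convex ℝ K) :
    μ (K - K) ≤ (2 * finrank ℝ E).choose (finrank ℝ E) * μ K := by
  rcases K.eq_empty_or_nonempty with rfl | hKne
  · simp
  rcases eq_or_ne (finrank ℝ E) 0 with hn | hn
  · have : Subsingleton E := finrank_zero_iff.1 hn
    simp [hn, hKne.eq_univ]
  have hC : (2 * finrank ℝ E).choose (finrank ℝ E) ≠ 0 := (Nat.choose_pos (by omega)).ne'
  rcases eq_or_ne (μ K) 0 with hK0 | hK0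
  · simp [hK.addHaar_sub_self_eq_zero μ hK0]
  rcases eq_or_ne (μ K) ∞ with hKtop | hKtop
  · simp [hKtop, hC]
  have h := hK.measure_div_choose_mul_addHaar_sub_self_le μ hn hK0 hKtop
  rwa [div_eq_mul_inv, mul_assoc, ENNReal.mul_le_mul_iff_right hK0 hKtop,
    ← ENNReal.div_eq_inv_mul, ENNReal.div_le_iff' (by simpa) (by simp)] at h

end Convex

theorem aemeasurable_of_convex_setOf_lt {E : Type*} [NormedAddCommGroup E] [NormedSpace ℝ E]
    [MeasurableSpace E] [BorelSpace E] [FiniteDimensional ℝ E] (μ : Measure E)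
    [μ.IsAddHaarMeasure] {β : Type*} [LinearOrder β] [TopologicalSpace β] [OrderTopology β]
    [SecondCountableTopology β] [MeasurableSpace β] [BorelSpace β] {F : E → β}
    (h : ∀ c, Convex ℝ {x | c < F x}) : AEMeasurable F μ := by
  have : @Measurable _ _ (NullMeasurableSpace.instMeasurableSpace (μ := μ)) _ F :=
    measurable_of_Ioi fun c => (h c).nullMeasurableSet μ
  exact NullMeasurable.aemeasurable this

section QuasiConcave

variable {n : ℕ} {f : (Fin n → ℝ) → ℝ}

theorem QuasiConcaveFn.quasiconcaveOn (hf : QuasiConcaveFn f) : QuasiconcaveOn ℝ univ f := by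
  refine quasiconcaveOn_iff_min_le.2 ⟨convex_univ, fun x _ y _ a b ha hb hab => ?_⟩
  obtain rfl : b = 1 - a := by linarith
  exact hf x y a ⟨ha, by linarith⟩

theorem QuasiConcaveFn.convex_setOf_lt_ofReal (hf : QuasiConcaveFn f) (c : ℝ≥0∞) :
    Convex ℝ {x | c < ENNReal.ofReal (f x)} := by
  simpa using (hf.quasiconcaveOn.monotone_comp ENNReal.ofReal_mono).convex_gt c

theorem setOf_lt_diffNegInf (f : (Fin n → ℝ) → ℝ) (c : ℝ≥0∞) :
    {z | c < diffNegInf f z} =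
      (fun p : (Fin n → ℝ) × (Fin n → ℝ) => (1 / 2 : ℝ) • (p.1 + p.2)) ''
        {p | c < ENNReal.ofReal (f p.1) ∧ c < ENNReal.ofReal (f (-p.2))} := by
  ext z
  simp only [mem_ofPred_eq, diffNegInf, lt_sSup_iff, mem_image, Prod.exists]
  constructor
  · rintro ⟨_, ⟨x, y, rfl, rfl⟩, h⟩
    exact ⟨x, y, by rwa [ENNReal.ofReal_min, lt_min_iff] at h, rfl⟩
  · rintro ⟨x, y, h, rfl⟩
    exact ⟨_, ⟨x, y, rfl, rfl⟩, by rwa [ENNReal.ofReal_min, lt_min_iff]⟩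

theorem QuasiConcaveFn.convex_setOf_lt_diffNegInf (hf : QuasiConcaveFn f) (c : ℝ≥0∞) :
    Convex ℝ {z | c < diffNegInf f z} := by
  rw [setOf_lt_diffNegInf]
  have hS := hf.convex_setOf_lt_ofReal c
  exact ((hS.linear_preimage (LinearMap.fst ℝ _ _)).inter
    (hS.linear_preimage (-LinearMap.snd ℝ _ _))).linear_image
    ((1 / 2 : ℝ) • (LinearMap.fst ℝ _ _ + LinearMap.snd ℝ _ _))

theorem setOf_lt_diffNegInf_subset (f : (Fin n → ℝ) → ℝ) (c : ℝ≥0∞) :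
    {z | c < diffNegInf f z} ⊆
      (1 / 2 : ℝ) • ({x | c < ENNReal.ofReal (f x)} - {x | c < ENNReal.ofReal (f x)}) := by
  rw [setOf_lt_diffNegInf]
  rintro _ ⟨p, ⟨h1, h2⟩, rfl⟩
  simpa using smul_mem_smul_set (a := (1 / 2 : ℝ))
    (sub_mem_sub (t := {x | c < ENNReal.ofReal (f x)}) h1 h2)

theorem QuasiConcaveFn.volume_setOf_lt_diffNegInf_le (hf : QuasiConcaveFn f) (c : ℝ≥0∞) :
    volume {z | c < diffNegInf f z} ≤
      (2 ^ n)⁻¹ * (2 * n).choose n * volume {x | c < ENNReal.ofReal (f x)} := by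
  set S := {x | c < ENNReal.ofReal (f x)}
  have hRS := (hf.convex_setOf_lt_ofReal c).addHaar_sub_self_le volume
  rw [finrank_fin_fun] at hRS
  calc volume {z | c < diffNegInf f z} ≤ volume ((1 / 2 : ℝ) • (S - S)) :=
        measure_mono (setOf_lt_diffNegInf_subset f c)
    _ ≤ (2 ^ n)⁻¹ * ((2 * n).choose n * volume S) := by
        rw [addHaar_smul_of_nonneg volume (by norm_num), finrank_fin_fun, one_div, inv_pow,
          ENNReal.ofReal_inv_of_pos (by positivity), ENNReal.ofReal_pow zero_le_two,
          ENNReal.ofReal_ofNat]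
        gcongr
    _ = _ := (mul_assoc _ _ _).symm

end QuasiConcave

theorem lintegral_diffNegInf_le_general {n : ℕ} (f : (Fin n → ℝ) → ℝ)
    (hf : QuasiConcaveFn f) :
    ∫⁻ z, diffNegInf f z ≤
      (2 ^ n : ℝ≥0∞)⁻¹ * (Nat.choose (2 * n) n : ℝ≥0∞) *
        ∫⁻ x, ENNReal.ofReal (f x) := by
  calc ∫⁻ z, diffNegInf f z
      = ∫⁻ t in Ioi 0, volume {z | ENNReal.ofReal t < diffNegInf f z} :=
        lintegral_eq_lintegral_meas_ofReal_lt
          (aemeasurable_of_convex_setOf_lt volume hf.convex_setOf_lt_diffNegInf)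
    _ ≤ ∫⁻ t in Ioi 0, (2 ^ n)⁻¹ * (2 * n).choose n *
          volume {x | ENNReal.ofReal t < ENNReal.ofReal (f x)} :=
        lintegral_mono fun t => hf.volume_setOf_lt_diffNegInf_le _
    _ = (2 ^ n)⁻¹ * (2 * n).choose n * ∫⁻ x, ENNReal.ofReal (f x) := by
        rw [lintegral_const_mul' _ _ (ENNReal.mul_ne_top (by simp) (by simp)),
          lintegral_eq_lintegral_meas_ofReal_lt
            (aemeasurable_of_convex_setOf_lt volume hf.convex_setOf_lt_ofReal)]

/-- For a nonnegative quasi-concave `f ∈ L¹(ℝⁿ)`,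
`∫ Δ_{−∞} f ≤ 2^{−n} (2n choose n) ∫ f`. -/
theorem lintegral_diffNegInf_le {n : ℕ} (hn : 1 ≤ n) (f : (Fin n → ℝ) → ℝ)
    (hf0 : ∀ x, 0 ≤ f x) (hf : QuasiConcaveFn f) (hint : Integrable f) :
    ∫⁻ z, diffNegInf f z ≤
      (2 ^ n : ℝ≥0∞)⁻¹ * (Nat.choose (2 * n) n : ℝ≥0∞) *
        ∫⁻ x, ENNReal.ofReal (f x) :=
  lintegral_diffNegInf_le_general f hf
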